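/- arXiv:2509.15584 — 2 statements merged into one kernel-verified Lean document; each statement's English description precedes it below -/
import Mathlib

section
/- Polynomial-time-bounded simulation composes under the 'follows' condition: if T1 follows T2 via map M21 and T2 follows T3 via map M32 (where 'T follows T'' via M means: whenever A' macro-transitions to B' in T' with M(A') and M(B') both defined and M(A') ≠ M(B'), then M(A') single-step transitions to M(B') in T), then T1 follows T3 via the partial composition M31 = M21 ∘ M32 (defined where both are defined). -/
/-- A macro transition `A' ⇒ B'` relative to configuration map `M`: a finite transition
sequence from `A'` to `B'` where `M A'` and `M B'` are defined and each intermediate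
configuration maps to either `M A'` or `⊥`. -/
def Macro {σ τ : Type*} (step : σ → σ → Prop) (M : σ → Option τ) (A B : σ) : Prop :=
  ∃ (n : ℕ) (f : ℕ → σ), f 0 = A ∧ f n = B ∧ (∀ i < n, step (f i) (f (i + 1))) ∧
    (M A).isSome ∧ (M B).isSome ∧
    ∀ i, 0 < i → i < n → (M (f i) = M A ∨ M (f i) = none)

/-- `T follows T'` via `M`: whenever `A'` macro-transitions to `B'` in `T'` with `M A'` and
`M B'` both defined and distinct, `M A'` single-step transitions to `M B'` in `T`. -/
def Follows {σ τ : Type*} (stepT : τ → τ → Prop) (stepT' : σ → σ → Prop)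
    (M : σ → Option τ) : Prop :=
  ∀ (A' B' : σ) (a b : τ), Macro stepT' M A' B' → M A' = some a → M B' = some b →
    a ≠ b → stepT a b

/-!
Cut the `T3`-run at the configurations where `M32` is defined. Between two consecutive such
configurations `M32` is undefined, so they form an `M32`-macro transition and their images are
equal or one `T2`-step apart. Dropping repetitions gives a `T2`-run in which every configuration
but the last is sent by `M21` to `M31 A'` or `⊥`: an `M21`-macro transition.
-/

open Relation

theorem Relation.ReflTransGen.exists_path {σ : Type*} {r : σ → σ → Prop} {x y : σ}
    (h : ReflTransGen r x y) :
    ∃ (n : ℕ) (f : ℕ → σ), f 0 = x ∧ f n = y ∧ ∀ i < n, r (f i) (f (i + 1)) := by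
  induction h using ReflTransGen.head_induction_on with
  | refl => exact ⟨0, fun _ => y, rfl, rfl, by simp⟩
  | @head x z hxz _ ih =>
    obtain ⟨n, f, hf0, hfn, hf⟩ := ih
    refine ⟨n + 1, fun | 0 => x | i + 1 => f i, rfl, hfn, ?_⟩
    rintro (_ | i) hi
    · simpa [hf0] using hxz
    · exact hf i (by omega)

section Macro

variable {σ τ : Type*} {step : σ → σ → Prop} {M : σ → Option τ}

theorem Macro.of_reflTransGen {A B : σ}
    (h : ReflTransGen (fun x y => step x y ∧ (M x = M A ∨ M x = none)) A B)
    (hA : (M A).isSome) (hB : (M B).isSome) : Macro step M A B := by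
  obtain ⟨n, f, hf0, hfn, hf⟩ := h.exists_path
  exact ⟨n, f, hf0, hfn, fun i hi => (hf i hi).1, hA, hB, fun i _ hi => (hf i hi).2⟩

theorem Macro.of_segment {f : ℕ → σ} {m k : ℕ} (hmk : m ≤ k)
    (hf : ∀ i, m ≤ i → i < k → step (f i) (f (i + 1)))
    (hm : (M (f m)).isSome) (hk : (M (f k)).isSome)
    (hgap : ∀ i, m < i → i < k → M (f i) = none) : Macro step M (f m) (f k) :=
  ⟨k - m, fun i => f (m + i), rfl, congrArg f (Nat.add_sub_cancel' hmk),
    fun i hi => hf (m + i) (by omega) (by omega), hm, hk,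
    fun i _ hi => Or.inr (hgap (m + i) (by omega) (by omega))⟩

end Macro

theorem Follows.reflTransGen_of_path {σ τ : Type*} {stepT : τ → τ → Prop}
    {stepT' : σ → σ → Prop} {M : σ → Option τ} (hM : Follows stepT stepT' M)
    {P : τ → Prop} {f : ℕ → σ} {n : ℕ} {c₀ c : τ}
    (hf : ∀ i < n, stepT' (f i) (f (i + 1))) (hP : ∀ i < n, ∀ c, M (f i) = some c → P c)
    (h₀ : M (f 0) = some c₀) (hn : M (f n) = some c) :
    ReflTransGen (fun x y => stepT x y ∧ P x) c₀ c := by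
  -- `m` is the last index `≤ k` at which `M` is defined.
  have key : ∀ k ≤ n, ∃ m ≤ k, (∀ i, m < i → i ≤ k → M (f i) = none) ∧
      ∃ cm, M (f m) = some cm ∧ ReflTransGen (fun x y => stepT x y ∧ P x) c₀ cm := by
    intro k hk
    induction k with
    | zero => exact ⟨0, le_rfl, fun i h₁ h₂ => absurd h₂ (by omega), c₀, h₀, .refl⟩
    | succ k ih =>
      obtain ⟨m, hmk, hgap, cm, hcm, hpath⟩ := ih (by omega)
      cases hk₁ : M (f (k + 1)) with
      | none =>
        exact ⟨m, by omega,
          fun i h₁ h₂ => (Nat.le_succ_iff.mp h₂).elim (hgap i h₁) (fun e => e ▸ hk₁), cm, hcm,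
          hpath⟩
      | some c' =>
        refine ⟨k + 1, le_rfl, fun i h₁ h₂ => absurd h₂ (by omega), c', hk₁, ?_⟩
        by_cases hc : cm = c'
        · exact hc ▸ hpath
        have hmacro : Macro stepT' M (f m) (f (k + 1)) :=
          .of_segment (by omega) (fun i _ hi => hf i (by omega)) (by simp [hcm]) (by simp [hk₁])
            (fun i h₁ h₂ => hgap i h₁ (by omega))
        exact hpath.tail ⟨hM _ _ _ _ hmacro hcm hk₁ hc, hP m (by omega) cm hcm⟩
  obtain ⟨m, hm, hgap, cm, hcm, hpath⟩ := key n le_rfl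
  obtain rfl : m = n := by
    by_contra hne
    simp [hgap n (by omega) le_rfl] at hn
  rwa [Option.some_inj.mp (hcm.symm.trans hn)] at hpath

/-- 'Follows' composes: if `T1` follows `T2` via `M21` and `T2` follows `T3` via `M32`,
then `T1` follows `T3` via the partial composition `M31 = M21 ∘ M32`. -/
theorem follows_trans {C1 C2 C3 : Type*}
    (step1 : C1 → C1 → Prop) (step2 : C2 → C2 → Prop) (step3 : C3 → C3 → Prop)
    (M21 : C2 → Option C1) (M32 : C3 → Option C2)
    (h21 : Follows step1 step2 M21) (h32 : Follows step2 step3 M32) :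
    Follows step1 step3 (fun c => (M32 c).bind M21) := by
  intro A' B' a b hmacro hA hB hab
  obtain ⟨A₂, hA₂, hA₂a⟩ := Option.bind_eq_some_iff.mp hA
  obtain ⟨B₂, hB₂, hB₂b⟩ := Option.bind_eq_some_iff.mp hB
  obtain ⟨n, f, rfl, rfl, hf, -, -, hmid⟩ := hmacro
  refine h21 A₂ B₂ a b (.of_reflTransGen ?_ (by simp [hA₂a]) (by simp [hB₂b])) hA₂a hB₂b hab
  refine h32.reflTransGen_of_path hf (fun i hi c hc => ?_) hA₂ hB₂
  rcases i.eq_zero_or_pos with rfl | hi₀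
  · exact .inl (by rw [Option.some_inj.mp (hA₂.symm.trans hc)])
  · simpa [hc, hA, hA₂a] using hmid i hi₀ hi
end

section
/- In the register machine simulation by a k-Void-Genesis CRN, the increment instruction is faithfully simulated: if the configuration contains one copy of state species s_j with instruction inc(r_i, s_k) and the count of r_i is m ≥ 1 (so z_{r_i} is absent), then applying the rule s_j + r_i → s_k + 2·r_i yields a configuration with one copy of s_k and count m+1 of r_i; if instead m = 0 and one copy of z_{r_i} is present, applying s_j + z_{r_i} → s_k + r_i yields one copy of s_k and count 1 of r_i with z_{r_i} absent. -/
/- Firing a rule with reactants `r` and products `p` takes `C` to `C - r + p`, computed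
pointwise. Since the species involved are pairwise distinct, the rule is applicable as soon as
each of its two reactants is present, and the count of each species changes only by the
singleton terms located at it. -/

abbrev Config (Λ : Type*) := Λ → ℕ

section Firing

variable {Λ : Type*}

def Config.fire (C r p : Config Λ) : Config Λ := C - r + p

@[simp]
lemma Config.fire_apply (C r p : Config Λ) (x : Λ) : C.fire r p x = C x - r x + p x := rfl

variable [DecidableEq Λ]

lemma Pi.single_add_single_le_iff {M : Type*} [AddMonoid M] [PartialOrder M]
    [CanonicallyOrderedAdd M] {a b : Λ} (hab : a ≠ b) {x y : M} {C : Λ → M} :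
    Pi.single a x + Pi.single b y ≤ C ↔ x ≤ C a ∧ y ≤ C b := by
  refine ⟨fun h => ⟨by simpa [hab] using h a, by simpa [hab.symm] using h b⟩, ?_⟩
  rintro ⟨ha, hb⟩ c
  by_cases hca : c = a
  · subst hca; simpa [hab] using ha
  · by_cases hcb : c = b
    · subst hcb; simpa [hca] using hb
    · simp [hca, hcb]

variable {sj sk ri zri : Λ} (C : Config Λ)

lemma fire_inc_apply_state (hjk : sj ≠ sk) (hkr : sk ≠ ri) :
    C.fire (Pi.single sj 1 + Pi.single ri 1) (Pi.single sk 1 + 2 • Pi.single ri 1) sk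
      = C sk + 1 := by
  simp [hjk.symm, hkr]

lemma fire_inc_apply_register (hjr : sj ≠ ri) (hkr : sk ≠ ri) (hr : 1 ≤ C ri) :
    C.fire (Pi.single sj 1 + Pi.single ri 1) (Pi.single sk 1 + 2 • Pi.single ri 1) ri
      = C ri + 1 := by
  simp [hjr, hkr]
  omega

lemma fire_incZero_apply_state (hjk : sj ≠ sk) (hkr : sk ≠ ri) (hkz : sk ≠ zri) :
    C.fire (Pi.single sj 1 + Pi.single zri 1) (Pi.single sk 1 + Pi.single ri 1) sk
      = C sk + 1 := by
  simp [hjk.symm, hkr, hkz.symm]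

lemma fire_incZero_apply_register (hkr : sk ≠ ri) (hr : C ri = 0) :
    C.fire (Pi.single sj 1 + Pi.single zri 1) (Pi.single sk 1 + Pi.single ri 1) ri = 1 := by
  simp [hkr, hr]

lemma fire_incZero_apply_zero (hjz : sj ≠ zri) (hkz : sk ≠ zri) (hrz : ri ≠ zri) :
    C.fire (Pi.single sj 1 + Pi.single zri 1) (Pi.single sk 1 + Pi.single ri 1) zri
      = C zri - 1 := by
  simp [hjz, hkz, hrz]

end Firing

theorem kvg_inc_faithful_general {Λ : Type*} [DecidableEq Λ]
    (sj sk ri zri : Λ)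
    (hjk : sj ≠ sk) (hjr : sj ≠ ri) (hjz : sj ≠ zri)
    (hkr : sk ≠ ri) (hkz : sk ≠ zri) (hrz : ri ≠ zri)
    (C D : Config Λ) (m : ℕ) (hm : 1 ≤ m) :
    (C sj = 1 → C ri = m → C zri = 0 → C sk = 0 →
      (Pi.single sj 1 + Pi.single ri 1 : Config Λ) ≤ C ∧
      (let C' := C - (Pi.single sj 1 + Pi.single ri 1)
        + (Pi.single sk 1 + 2 • Pi.single ri 1);
        C' sk = 1 ∧ C' ri = m + 1)) ∧
    (D sj = 1 → D ri = 0 → D zri = 1 → D sk = 0 →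
      (Pi.single sj 1 + Pi.single zri 1 : Config Λ) ≤ D ∧
      (let D' := D - (Pi.single sj 1 + Pi.single zri 1)
        + (Pi.single sk 1 + Pi.single ri 1);
        D' sk = 1 ∧ D' ri = 1 ∧ D' zri = 0)) := by
  refine ⟨fun hj hr _ hk => ⟨?_, ?_, ?_⟩, fun hj hr hz hk => ⟨?_, ?_, ?_, ?_⟩⟩
  · exact (Pi.single_add_single_le_iff hjr).2 ⟨hj.ge, hr ▸ hm⟩
  · simpa [hk] using fire_inc_apply_state C hjk hkr
  · simpa [hr] using fire_inc_apply_register C hjr hkr (hr ▸ hm)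
  · exact (Pi.single_add_single_le_iff hjz).2 ⟨hj.ge, hz.ge⟩
  · simpa [hk] using fire_incZero_apply_state D hjk hkr hkz
  · exact fire_incZero_apply_register D hkr hr
  · simpa [hz] using fire_incZero_apply_zero D hjz hkz hrz

/-- In the k-VG CRN encoding of a register machine, the increment instruction
`s_j : inc(r_i, s_k)` (rules `s_j + r_i → s_k + 2 r_i` and `s_j + z_{r_i} → s_k + r_i`)
is faithfully simulated: if `C` has one `s_j`, `m ≥ 1` copies of `r_i`, no `z_{r_i}` and
no `s_k`, then the first rule applies and yields one `s_k` and `m + 1` copies of `r_i`;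
if instead `D` has one `s_j`, zero `r_i`, one `z_{r_i}` and no `s_k`, the second rule
applies and yields one `s_k`, one `r_i`, and no `z_{r_i}`. -/
theorem kvg_inc_faithful {Λ : Type*} [Fintype Λ] [DecidableEq Λ]
    (sj sk ri zri : Λ)
    (hjk : sj ≠ sk) (hjr : sj ≠ ri) (hjz : sj ≠ zri)
    (hkr : sk ≠ ri) (hkz : sk ≠ zri) (hrz : ri ≠ zri)
    (C D : Config Λ) (m : ℕ) (hm : 1 ≤ m) :
    (C sj = 1 → C ri = m → C zri = 0 → C sk = 0 →
      (Pi.single sj 1 + Pi.single ri 1 : Config Λ) ≤ C ∧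
      (let C' := C - (Pi.single sj 1 + Pi.single ri 1)
        + (Pi.single sk 1 + 2 • Pi.single ri 1);
        C' sk = 1 ∧ C' ri = m + 1)) ∧
    (D sj = 1 → D ri = 0 → D zri = 1 → D sk = 0 →
      (Pi.single sj 1 + Pi.single zri 1 : Config Λ) ≤ D ∧
      (let D' := D - (Pi.single sj 1 + Pi.single zri 1)
        + (Pi.single sk 1 + Pi.single ri 1);
        D' sk = 1 ∧ D' ri = 1 ∧ D' zri = 0)) :=
  kvg_inc_faithful_general sj sk ri zri hjk hjr hjz hkr hkz hrz C D m hm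
end
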